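/- Let S be a ring graded by a small groupoid G. Then S is epsilon-strongly graded if and only if every graded left S-module M is epsilon-strongly graded, i.e., for all composable (g,h), S_g M_h = S_g S_{g^{-1}} M_{gh}. -/

import Mathlib

/- Setup: a ring `S` graded by a small groupoid.  The groupoid is given by a
`CategoryTheory.Groupoid` structure on a type `Obj` of objects.  Composition
convention: for `g : X ⟶ Y` and `h : Y ⟶ Z`, `g ≫ h : X ⟶ Z`; the grading
satisfies `S_g · S_h ⊆ S_{g ≫ h}` for composable morphisms and
`S_g · S_h = 0` otherwise, and `S = ⊕_{g} S_g` (an internal direct sum over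
the type of all morphisms). -/

open CategoryTheory DirectSum

/-- The type of all morphisms of the groupoid. -/
abbrev MorTot (Obj : Type u) [Groupoid.{v} Obj] : Type (max u v) := Σ X Y : Obj, X ⟶ Y

/-- Product of two additive subgroups of a ring: the additive span of the set of
pairwise products. -/
def aMul {S : Type w} [Ring S] (A B : AddSubgroup S) : AddSubgroup S :=
  AddSubgroup.closure {x : S | ∃ a ∈ A, ∃ b ∈ B, x = a * b}

/-- A grading of the ring `S` by the groupoid with objects `Obj`. -/
structure GroupoidGrading (Obj : Type u) [Groupoid.{v} Obj] [DecidableEq (MorTot Obj)]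
    (S : Type w) [Ring S] where
  comp : ∀ ⦃X Y : Obj⦄, (X ⟶ Y) → AddSubgroup S
  internal : DirectSum.IsInternal (fun g : MorTot Obj => comp g.2.2)
  mul_mem : ∀ ⦃X Y Z : Obj⦄ (g : X ⟶ Y) (h : Y ⟶ Z) ⦃a b : S⦄,
    a ∈ comp g → b ∈ comp h → a * b ∈ comp (g ≫ h)
  mul_eq_zero : ∀ ⦃X Y Z W : Obj⦄ (g : X ⟶ Y) (h : Z ⟶ W), Y ≠ Z →
    ∀ ⦃a b : S⦄, a ∈ comp g → b ∈ comp h → a * b = 0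

variable {Obj : Type u} [Groupoid.{v} Obj] [DecidableEq (MorTot Obj)]
  {S : Type w} [Ring S]

/-- The component `(1_S)_e ∈ S_e` of `1` at the identity morphism of `X`. -/
noncomputable def GroupoidGrading.oneComponent (hS : GroupoidGrading Obj S) (X : Obj) : S :=
  ((Equiv.ofBijective _ hS.internal).symm (1 : S) ⟨X, X, 𝟙 X⟩ : hS.comp (𝟙 X))

/-- `I` is a unital ideal of the (sub)ring `C`. -/
def IsUnitalIdealOf {S : Type w} [Ring S] (I C : AddSubgroup S) : Prop :=
  I ≤ C ∧ (∀ a ∈ C, ∀ x ∈ I, a * x ∈ I ∧ x * a ∈ I) ∧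
    ∃ e ∈ I, ∀ x ∈ I, e * x = x ∧ x * e = x

/-- `S` is epsilon-strongly graded: each `S_g S_{g⁻¹}` is a unital ideal of
`S_{c(g)}` and `S_g S_h = (S_g S_{g⁻¹}) S_{gh} = S_{gh} (S_{h⁻¹} S_h)` for all
composable pairs. -/
def GroupoidGrading.EpsilonStrong {Obj : Type u} [Groupoid.{v} Obj]
    [DecidableEq (MorTot Obj)] {S : Type w} [Ring S]
    (hS : GroupoidGrading Obj S) : Prop :=
  (∀ ⦃X Y : Obj⦄ (g : X ⟶ Y),
     IsUnitalIdealOf (aMul (hS.comp g) (hS.comp (Groupoid.inv g))) (hS.comp (𝟙 X))) ∧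
  (∀ ⦃X Y Z : Obj⦄ (g : X ⟶ Y) (h : Y ⟶ Z),
     aMul (hS.comp g) (hS.comp h)
       = aMul (aMul (hS.comp g) (hS.comp (Groupoid.inv g))) (hS.comp (g ≫ h)) ∧
     aMul (hS.comp g) (hS.comp h)
       = aMul (hS.comp (g ≫ h)) (aMul (hS.comp (Groupoid.inv h)) (hS.comp h)))

/-- A grading of a left `S`-module `M` by the groupoid: `M = ⊕_g M_g` with
`S_g • M_h ⊆ M_{gh}` for composable pairs and `S_g • M_h = 0` otherwise. -/
structure GradedModule {Obj : Type u} [Groupoid.{v} Obj] [DecidableEq (MorTot Obj)]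
    {S : Type w} [Ring S] (hS : GroupoidGrading Obj S)
    (M : Type w) [AddCommGroup M] [Module S M] where
  comp : ∀ ⦃X Y : Obj⦄, (X ⟶ Y) → AddSubgroup M
  internal : DirectSum.IsInternal (fun g : MorTot Obj => comp g.2.2)
  smul_mem : ∀ ⦃X Y Z : Obj⦄ (g : X ⟶ Y) (h : Y ⟶ Z) ⦃s : S⦄ ⦃m : M⦄,
    s ∈ hS.comp g → m ∈ comp h → s • m ∈ comp (g ≫ h)
  smul_eq_zero : ∀ ⦃X Y Z W : Obj⦄ (g : X ⟶ Y) (h : Z ⟶ W), Y ≠ Z →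
    ∀ ⦃s : S⦄ ⦃m : M⦄, s ∈ hS.comp g → m ∈ comp h → s • m = 0

/-- The additive span of `A • B` for an additive subgroup `A` of the ring and an
additive subgroup `B` of the module. -/
def aSMul {S : Type w} [Ring S] {M : Type w} [AddCommGroup M] [Module S M]
    (A : AddSubgroup S) (B : AddSubgroup M) : AddSubgroup M :=
  AddSubgroup.closure {x : M | ∃ a ∈ A, ∃ b ∈ B, x = a • b}

/-- A graded left module is epsilon-strongly graded: each `S_g S_{g⁻¹}` is a unital
ideal of `S_{c(g)}` and `S_g M_h = (S_g S_{g⁻¹}) M_{gh}` for all composable pairs. -/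
def GradedModule.EpsilonStrong {Obj : Type u} [Groupoid.{v} Obj]
    [DecidableEq (MorTot Obj)] {S : Type w} [Ring S] {hS : GroupoidGrading Obj S}
    {M : Type w} [AddCommGroup M] [Module S M] (gM : GradedModule hS M) : Prop :=
  (∀ ⦃X Y : Obj⦄ (g : X ⟶ Y),
     IsUnitalIdealOf (aMul (hS.comp g) (hS.comp (Groupoid.inv g))) (hS.comp (𝟙 X))) ∧
  (∀ ⦃X Y Z : Obj⦄ (g : X ⟶ Y) (h : Y ⟶ Z),
     aSMul (hS.comp g) (gM.comp h)
       = aSMul (aMul (hS.comp g) (hS.comp (Groupoid.inv g))) (gM.comp (g ≫ h)))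

/-!
For `s ∈ S_g` with `g : X ⟶ Y`, comparing `g`-components in `s = s · ∑ₖ 1ₖ` gives
`s · 1_{𝟙 Y} = s`, so `S_g = S_g S_{𝟙 Y}`; the identity `S_g S_{𝟙 Y} = (S_g S_{g⁻¹}) S_g` then
gives `S_g = (S_g S_{g⁻¹}) S_g`. For a graded module this yields
`S_g M_h ⊆ (S_g S_{g⁻¹}) M_{gh}`, and the reverse inclusion holds because
`S_{g⁻¹} M_{gh} ⊆ M_h`. Conversely, `S` graded over itself gives the left identities
`S_g S_h = (S_g S_{g⁻¹}) S_{gh}`; the right ones follow once the unit of `S_{h⁻¹} S_h` is seen to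
be a right unit of `S_h`.
-/

section SubgroupProducts

variable {S : Type w} [Ring S] {A B : AddSubgroup S}

theorem mul_mem_aMul {a b : S} (ha : a ∈ A) (hb : b ∈ B) : a * b ∈ aMul A B :=
  AddSubgroup.subset_closure ⟨a, ha, b, hb, rfl⟩

theorem map_mem_of_mem_aMul {N : Type*} [AddCommGroup N] (f : S →+ N) {C : AddSubgroup N}
    (h : ∀ a ∈ A, ∀ b ∈ B, f (a * b) ∈ C) {x : S} (hx : x ∈ aMul A B) : f x ∈ C := by
  suffices aMul A B ≤ C.comap f from this hx
  rw [aMul, AddSubgroup.closure_le]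
  rintro _ ⟨a, ha, b, hb, rfl⟩
  exact h a ha b hb

theorem aMul_le {C : AddSubgroup S} (h : ∀ a ∈ A, ∀ b ∈ B, a * b ∈ C) : aMul A B ≤ C :=
  fun _ hx => map_mem_of_mem_aMul (.id S) h hx

theorem mul_eq_of_mem_aMul {C : AddSubgroup S} {e : S} (he : ∀ x ∈ A, e * x = x) {s : S}
    (hs : s ∈ aMul A C) : e * s = s := by
  have := map_mem_of_mem_aMul (AddMonoidHom.mulLeft e - .id S) (C := ⊥)
    (fun a ha c _ => by simp [← mul_assoc, he a ha]) hs
  simpa [sub_eq_zero] using this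

theorem mul_eq_zero_of_mem_aMul {u : S} (hu : ∀ b ∈ B, b * u = 0) {x : S}
    (hx : x ∈ aMul A B) : x * u = 0 := by
  simpa using map_mem_of_mem_aMul (AddMonoidHom.mulRight u) (C := ⊥)
    (fun a _ b hb => by simp [mul_assoc, hu b hb]) hx

/-- For `s ∈ A`, `u = s - s e'` is killed by `B`, hence by `e`, while `e u = u`. -/
theorem mul_eq_of_mul_eq_of_le_aMul {e e' : S} (he : e ∈ aMul A B)
    (he_unit : ∀ x ∈ aMul A B, e * x = x) (he'_unit : ∀ x ∈ aMul B A, x * e' = x)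
    (hA : A ≤ aMul (aMul A B) A) {s : S} (hs : s ∈ A) : s * e' = s := by
  have hes : e * s = s := mul_eq_of_mem_aMul he_unit (hA hs)
  have hB : ∀ b ∈ B, b * (s - s * e') = 0 := fun b hb => by
    rw [mul_sub, ← mul_assoc, he'_unit _ (mul_mem_aMul hb hs), sub_self]
  have h0 : e * (s - s * e') = 0 := mul_eq_zero_of_mem_aMul hB he
  rw [mul_sub, ← mul_assoc, hes] at h0
  exact (sub_eq_zero.mp h0).symm

theorem aSMul_eq_aMul (A B : AddSubgroup S) : aSMul A B = aMul A B := rfl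

variable {M : Type w} [AddCommGroup M] [Module S M]

theorem smul_mem_aSMul {B : AddSubgroup M} {a : S} {b : M} (ha : a ∈ A) (hb : b ∈ B) :
    a • b ∈ aSMul A B :=
  AddSubgroup.subset_closure ⟨a, ha, b, hb, rfl⟩

theorem aSMul_le {B C : AddSubgroup M} (h : ∀ a ∈ A, ∀ b ∈ B, a • b ∈ C) : aSMul A B ≤ C := by
  rw [aSMul, AddSubgroup.closure_le]
  rintro _ ⟨a, ha, b, hb, rfl⟩
  exact h a ha b hb

theorem smul_mem_of_mem_aMul {C : AddSubgroup M} {m : M}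
    (h : ∀ a ∈ A, ∀ b ∈ B, a • b • m ∈ C) {x : S} (hx : x ∈ aMul A B) : x • m ∈ C :=
  map_mem_of_mem_aMul ((smulAddHom S M).flip m) (fun a ha b hb => by
    simpa [mul_smul] using h a ha b hb) hx

end SubgroupProducts

namespace GroupoidGrading

variable (hS : GroupoidGrading Obj S)

theorem mul_oneComponent {X Y : Obj} (g : X ⟶ Y) {s : S} (hs : s ∈ hS.comp g) :
    s * hS.oneComponent Y = s := by
  let := hS.internal.chooseDecomposition
  let 𝒮 : MorTot Obj → AddSubgroup S := fun k => hS.comp k.2.2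
  have hid : ∀ {Z : Obj} (f : Y ⟶ Z), (⟨X, Z, g ≫ f⟩ : MorTot Obj) = ⟨X, Y, g⟩ →
      (⟨Y, Z, f⟩ : MorTot Obj) = ⟨Y, Y, 𝟙 Y⟩ := by
    intro Z f heq
    obtain ⟨rfl, hf⟩ := Sigma.mk.inj_iff.mp (eq_of_heq (Sigma.mk.inj_iff.mp heq).2)
    rw [(cancel_epi g).mp ((eq_of_heq hf).trans (Category.comp_id g).symm)]
  have hcomp : ∀ t : S, (decompose 𝒮 (s * t) ⟨X, Y, g⟩ : S)
      = s * (decompose 𝒮 t ⟨Y, Y, 𝟙 Y⟩ : S) := by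
    refine Decomposition.inductionOn 𝒮 (by simp) ?_ (fun t t' ht ht' => by
      simp [mul_add, ht, ht'])
    rintro ⟨A, B, f⟩ ⟨t, ht⟩
    by_cases hk : (⟨A, B, f⟩ : MorTot Obj) = ⟨Y, Y, 𝟙 Y⟩
    · rw [hk] at ht
      have hst : s * t ∈ 𝒮 ⟨X, Y, g⟩ := by simpa using hS.mul_mem g (𝟙 Y) hs ht
      rw [decompose_of_mem_same 𝒮 hst, decompose_of_mem_same 𝒮 ht]
    · rw [decompose_of_mem_ne 𝒮 (i := ⟨A, B, f⟩) ht hk, mul_zero]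
      by_cases hA : Y = A
      · subst hA
        exact decompose_of_mem_ne 𝒮 (i := ⟨X, B, g ≫ f⟩) (hS.mul_mem g f hs ht)
          (fun h => hk (hid f h))
      · simp [hS.mul_eq_zero g f hA hs ht]
  have hone : (decompose 𝒮 1 ⟨Y, Y, 𝟙 Y⟩ : S) = hS.oneComponent Y := rfl
  simpa [hone, decompose_of_mem_same 𝒮 (i := ⟨X, Y, g⟩) hs] using (hcomp 1).symm

theorem oneComponent_mem (X : Obj) : hS.oneComponent X ∈ hS.comp (𝟙 X) :=
  ((Equiv.ofBijective _ hS.internal).symm 1 ⟨X, X, 𝟙 X⟩).2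

theorem comp_eq_aMul_comp_id {X Y : Obj} (g : X ⟶ Y) :
    hS.comp g = aMul (hS.comp g) (hS.comp (𝟙 Y)) := by
  refine le_antisymm (fun s hs => ?_) (aMul_le fun a ha b hb => ?_)
  · rw [← hS.mul_oneComponent g hs]
    exact mul_mem_aMul hs (hS.oneComponent_mem Y)
  · simpa using hS.mul_mem g (𝟙 Y) ha hb

theorem comp_le_of_aMul_comp_id_eq {X Y : Obj} (g : X ⟶ Y)
    (h : aMul (hS.comp g) (hS.comp (𝟙 Y))
      = aMul (aMul (hS.comp g) (hS.comp (Groupoid.inv g))) (hS.comp (g ≫ 𝟙 Y))) :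
    hS.comp g ≤ aMul (aMul (hS.comp g) (hS.comp (Groupoid.inv g))) (hS.comp g) := by
  rw [Category.comp_id] at h
  exact (hS.comp_eq_aMul_comp_id g).trans h |>.le

def selfGradedModule : GradedModule hS S where
  comp := hS.comp
  internal := hS.internal
  smul_mem _ _ _ g h _ _ hs hm := hS.mul_mem g h hs hm
  smul_eq_zero _ _ _ _ g h hne _ _ hs hm := hS.mul_eq_zero g h hne hs hm

theorem exists_mul_eq_self {X Y : Obj} (g : X ⟶ Y) (hε : ∀ ⦃X Y : Obj⦄ (g : X ⟶ Y),
      IsUnitalIdealOf (aMul (hS.comp g) (hS.comp (Groupoid.inv g))) (hS.comp (𝟙 X)))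
    (hg : hS.comp g ≤ aMul (aMul (hS.comp g) (hS.comp (Groupoid.inv g))) (hS.comp g)) :
    ∃ e ∈ aMul (hS.comp (Groupoid.inv g)) (hS.comp g), ∀ s ∈ hS.comp g, s * e = s := by
  obtain ⟨-, -, e, he, he_unit⟩ := hε g
  obtain ⟨-, -, e', he', he'_unit⟩ := hε (Groupoid.inv g)
  have hinv : Groupoid.inv (Groupoid.inv g) = g := by simp [Groupoid.inv_eq_inv]
  rw [hinv] at he' he'_unit
  exact ⟨e', he', fun s hs => mul_eq_of_mul_eq_of_le_aMul he (fun x hx => (he_unit x hx).1)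
    (fun x hx => (he'_unit x hx).2) hg hs⟩

theorem aMul_comp_eq_aMul_comp_comp_of_mul_eq {X Y Z : Obj} (g : X ⟶ Y) (h : Y ⟶ Z) {e : S}
    (he : e ∈ aMul (hS.comp (Groupoid.inv h)) (hS.comp h)) (he_unit : ∀ t ∈ hS.comp h, t * e = t) :
    aMul (hS.comp g) (hS.comp h)
      = aMul (hS.comp (g ≫ h)) (aMul (hS.comp (Groupoid.inv h)) (hS.comp h)) := by
  refine le_antisymm (aMul_le fun s hs t ht => ?_) (aMul_le fun r hr w hw => ?_)
  · rw [← he_unit t ht, ← mul_assoc]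
    exact mul_mem_aMul (hS.mul_mem g h hs ht) he
  · refine map_mem_of_mem_aMul (AddMonoidHom.mulLeft r) (fun x hx y hy => ?_) hw
    have hrx : r * x ∈ hS.comp g := by
      simpa using hS.mul_mem (g ≫ h) (Groupoid.inv h) hr hx
    simpa [← mul_assoc] using mul_mem_aMul hrx hy

end GroupoidGrading

theorem GradedModule.aSMul_comp_eq_of_le {hS : GroupoidGrading Obj S} {M : Type w}
    [AddCommGroup M] [Module S M] (gM : GradedModule hS M) {X Y Z : Obj} (g : X ⟶ Y) (h : Y ⟶ Z)
    (hg : hS.comp g ≤ aMul (aMul (hS.comp g) (hS.comp (Groupoid.inv g))) (hS.comp g)) :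
    aSMul (hS.comp g) (gM.comp h)
      = aSMul (aMul (hS.comp g) (hS.comp (Groupoid.inv g))) (gM.comp (g ≫ h)) := by
  refine le_antisymm (aSMul_le fun s hs m hm => ?_) (aSMul_le fun x hx n hn => ?_)
  · exact smul_mem_of_mem_aMul (fun a ha b hb => smul_mem_aSMul ha (gM.smul_mem g h hb hm))
      (hg hs)
  · refine smul_mem_of_mem_aMul (fun a ha b hb => smul_mem_aSMul ha ?_) hx
    simpa using gM.smul_mem (Groupoid.inv g) (g ≫ h) hb hn

/-- `S` is epsilon-strongly graded if and only if every graded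
left `S`-module `M` is epsilon-strongly graded. -/
theorem epsilonStrong_iff_modules (hS : GroupoidGrading Obj S) :
    hS.EpsilonStrong ↔
    ∀ (M : Type w) [AddCommGroup M] [Module S M] (gM : GradedModule hS M),
      gM.EpsilonStrong := by
  constructor
  · rintro ⟨hε, hmul⟩ M _ _ gM
    exact ⟨hε, fun X Y Z g h =>
      gM.aSMul_comp_eq_of_le g h (hS.comp_le_of_aMul_comp_id_eq g (hmul g (𝟙 Y)).1)⟩
  · intro hM
    obtain ⟨hε, hleft⟩ := hM S hS.selfGradedModule
    simp only [aSMul_eq_aMul] at hleft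
    refine ⟨hε, fun X Y Z g h => ⟨hleft g h, ?_⟩⟩
    obtain ⟨e, he, he_unit⟩ :=
      hS.exists_mul_eq_self h hε (hS.comp_le_of_aMul_comp_id_eq h (hleft h (𝟙 Z)))
    exact hS.aMul_comp_eq_aMul_comp_comp_of_mul_eq g h he he_unit
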